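/- arXiv:math/0506578 — 2 statements merged into one kernel-verified Lean document; each statement's English description precedes it below -/
import Mathlib

section
/- Fix n > 1, let α ∈ Fⁿ be a nonzero vector, let x ∈ V(n), and let X be the subspace of V(n) spanned by Ψ(α) together with x. Then Xⁿ ∩ ker(Φ_n) is nontrivial (i.e., there is a nonzero element of ker(Φ_n) all of whose components lie in X) if and only if x ∉ Ψ(α). -/
/-!
Read `x ∈ V(n)` as an alternating matrix and `z ∈ V(n)ⁿ` as the 3-tensor `T k j i = z_k[j,i]`.
Then `Φ z = 0` says exactly that `T` is an alternating 3-form, and `Ψ(α)` is the space of 2-forms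
`α ∧ β`. If `x ∈ Ψ(α)`, each `z_k` is some `α ∧ γ_k`; contracting `T` with `e_m`, where `α_m ≠ 0`,
first forces `γ_m ∥ α`, so `z_m = 0`, and then, by alternation, `γ_k ∥ α` for every `k`, so `z = 0`.
If `x ∉ Ψ(α)`, the 3-form `α ∧ x` has components `α_k x + α ∧ (x e_k) ∈ ⟨Ψ(α), x⟩`, and its
`m`-th component cannot vanish, for otherwise `x ∈ Ψ(α)`.
-/

open Submodule

/-- Index type for the distinguished basis of `V(n)`: pairs `(j,i)` with `i < j`. -/
abbrev VIdx (n : ℕ) := {q : Fin n × Fin n // q.2 < q.1}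

/-- Index type for the distinguished basis of `W(n)`: triples `(j,i,k)` with `i < j`, `i ≤ k`. -/
abbrev WIdx (n : ℕ) := {t : Fin n × Fin n × Fin n // t.2.1 < t.1 ∧ t.2.1 ≤ t.2.2}

/-- The vector space `V(n)` over `F`. -/
abbrev V (F : Type*) [Field F] (n : ℕ) := VIdx n → F

/-- The vector space `W(n)` over `F`. -/
abbrev W (F : Type*) [Field F] (n : ℕ) := WIdx n → F

variable (F : Type*) [Field F] (n : ℕ)

/-- The vector `v[j,i]`, with the conventions `v[i,j] = -v[j,i]` and `v[i,i] = 0`. -/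
noncomputable def v (j i : Fin n) : V F n :=
  if h : i < j then Pi.single (⟨(j, i), h⟩ : VIdx n) 1
  else if h' : j < i then -Pi.single (⟨(i, j), h'⟩ : VIdx n) 1
  else 0

/-- The vector `w[j,i,k]` (the basis vector when `i < j` and `i ≤ k`, zero otherwise). -/
noncomputable def w (j i k : Fin n) : W F n :=
  if h : i < j ∧ i ≤ k then Pi.single (⟨(j, i, k), h⟩ : WIdx n) 1 else 0

/-- The linear map `φ_k : V(n) → W(n)` determined on basis vectors by
`φ_k(v[j,i]) = w[j,i,k]` if `i ≤ k`, and `φ_k(v[j,i]) = w[j,k,i] - w[i,k,j]` if `k < i`. -/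
noncomputable def phi (k : Fin n) : V F n →ₗ[F] W F n :=
  (Pi.basisFun F (VIdx n)).constr F fun q =>
    if q.1.2 ≤ k then w F n q.1.1 q.1.2 k
    else w F n q.1.1 k q.1.2 - w F n q.1.2 k q.1.1

/-- The linear map `Φ_n : V(n)ⁿ → W(n)`, `Φ_n(x₁,…,x_n) = φ₁(x₁) + ⋯ + φ_n(x_n)`. -/
noncomputable def Phi : (Fin n → V F n) →ₗ[F] W F n :=
  ∑ k : Fin n, (phi F n k).comp (LinearMap.proj k)

/-- For `X ≤ V(n)`, the subspace `X* ≤ W(n)`: the span of `φ₁(X) ∪ ⋯ ∪ φ_n(X)`. -/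
noncomputable def starV (X : Submodule F (V F n)) : Submodule F (W F n) :=
  ⨆ k : Fin n, X.map (phi F n k)

/-- For `Y ≤ W(n)`, the subspace `Y* ≤ V(n)`: the intersection `⋂ₖ φ_k⁻¹(Y)`. -/
noncomputable def starW (Y : Submodule F (W F n)) : Submodule F (V F n) :=
  ⨅ k : Fin n, Y.comap (phi F n k)

/-- For `α = (α₁,…,α_n) ∈ Fⁿ`, `Ψ(α)` is the subspace of `V(n)` spanned by the `n` vectors
`y_i = Σ_j α_j · v[j,i]`, `i = 1,…,n`. -/
noncomputable def Psi (α : Fin n → F) : Submodule F (V F n) :=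
  Submodule.span F (Set.range fun i : Fin n => ∑ j : Fin n, α j • v F n j i)

variable {F n}

/-- `entry j i x` is the `(j, i)` entry of `x` read as an alternating matrix, so that
`x = ∑_{i<j} entry j i x • v[j,i]`. -/
def entry (j i : Fin n) : V F n →ₗ[F] F :=
  if h : i < j then LinearMap.proj ⟨(j, i), h⟩
  else if h' : j < i then -LinearMap.proj ⟨(i, j), h'⟩
  else 0

lemma entry_of_lt {j i : Fin n} (h : i < j) (x : V F n) : entry j i x = x ⟨(j, i), h⟩ := by
  simp [entry, h]

@[simp]
lemma entry_self (i : Fin n) (x : V F n) : entry i i x = 0 := by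
  simp [entry]

lemma entry_swap (j i : Fin n) (x : V F n) : entry i j x = -entry j i x := by
  rcases lt_trichotomy i j with h | rfl | h
  · simp [entry, h, asymm h]
  · simp
  · simp [entry, h, asymm h]

lemma ext_entry {x y : V F n} (h : ∀ j i, entry j i x = entry j i y) : x = y := by
  funext ⟨⟨j, i⟩, hq⟩
  simpa only [entry_of_lt hq] using h j i

def wedge (α β : Fin n → F) : V F n := fun q => α q.1.1 * β q.1.2 - α q.1.2 * β q.1.1

@[simp]
lemma entry_wedge (α β : Fin n → F) (j i : Fin n) :
    entry j i (wedge α β) = α j * β i - α i * β j := by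
  rcases lt_trichotomy i j with h | rfl | h
  · simp [entry_of_lt h, wedge]
  · simp
  · rw [entry_swap, entry_of_lt h, wedge]
    ring

lemma v_eq_wedge (j i : Fin n) : v F n j i = wedge (Pi.single j 1) (Pi.single i 1) := by
  funext ⟨⟨a, b⟩, hab⟩
  simp only at hab
  rcases lt_trichotomy i j with h | rfl | h
  · simp only [v, wedge, h, dite_true, Pi.single_apply, Subtype.mk.injEq, Prod.mk.injEq]
    split_ifs <;> grind
  · simp only [v, wedge, lt_irrefl, dite_false, Pi.zero_apply, Pi.single_apply]
    split_ifs <;> grind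
  · simp only [v, wedge, h, asymm h, dite_true, dite_false, Pi.neg_apply, Pi.single_apply,
      Subtype.mk.injEq, Prod.mk.injEq]
    split_ifs <;> grind

lemma sum_smul_sum_smul_v (α β : Fin n → F) :
    ∑ i, β i • ∑ j, α j • v F n j i = wedge α β := by
  refine ext_entry fun a b => ?_
  simp only [v_eq_wedge, map_sum, map_smul, entry_wedge, Pi.single_apply, mul_ite, mul_one,
    mul_zero, smul_eq_mul, mul_sub, Finset.sum_sub_distrib, Finset.sum_ite_irrel,
    Finset.sum_ite_eq, Finset.mem_univ, if_true, Finset.sum_const_zero]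
  ring

lemma mem_Psi_iff {α : Fin n → F} {u : V F n} : u ∈ Psi F n α ↔ ∃ β, wedge α β = u := by
  simp only [Psi, mem_span_range_iff_exists_fun, sum_smul_sum_smul_v]

lemma wedge_mem_Psi (α β : Fin n → F) : wedge α β ∈ Psi F n α := mem_Psi_iff.2 ⟨β, rfl⟩

lemma w_apply (j i k : Fin n) (t : WIdx n) :
    w F n j i k t = if j = t.1.1 ∧ i = t.1.2.1 ∧ k = t.1.2.2 then 1 else 0 := by
  obtain ⟨⟨J, I, K⟩, hJ, hK⟩ := t
  unfold w
  split_ifs with h h' h'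
  · simp [h']
  · rw [Pi.single_apply, if_neg]
    grind
  · grind
  · rfl

lemma single_eq_v (q : VIdx n) : Pi.single q 1 = v F n q.1.1 q.1.2 := by
  simp [v, q.2]

lemma phi_apply (k : Fin n) (x : V F n) {J I K : Fin n} (hJ : I < J) (hK : I ≤ K) :
    phi F n k x ⟨(J, I, K), hJ, hK⟩ =
      (if k = K then entry J I x else 0) + (if k = I ∧ I < K then entry J K x else 0) := by
  have key : (LinearMap.proj ⟨(J, I, K), hJ, hK⟩).comp (phi F n k) =
      (if k = K then entry J I else 0) + (if k = I ∧ I < K then entry J K else 0) := by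
    refine (Pi.basisFun F (VIdx n)).ext fun q => ?_
    rw [LinearMap.comp_apply, phi, Module.Basis.constr_basis, Pi.basisFun_apply, single_eq_v,
      v_eq_wedge]
    obtain ⟨⟨a, b⟩, hab⟩ := q
    simp only at hab
    split_ifs <;> simp [w_apply, Pi.single_apply] <;> grind
  have := LinearMap.congr_fun key x
  split_ifs at this ⊢ <;> simpa using this

lemma Phi_apply (z : Fin n → V F n) {J I K : Fin n} (hJ : I < J) (hK : I ≤ K) :
    Phi F n z ⟨(J, I, K), hJ, hK⟩ = entry J I (z K) + if I < K then entry J K (z I) else 0 := by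
  simp [Phi, phi_apply _ _ hJ hK, Finset.sum_add_distrib, ite_and]

lemma entry_cyclic_of_Phi_eq_zero {z : Fin n → V F n} (hz : Phi F n z = 0) (k j i : Fin n) :
    entry j i (z k) = entry k j (z i) := by
  have diag : ∀ {I J}, I < J → entry J I (z I) = 0 := fun {I J} hJ => by
    simpa using (Phi_apply z hJ le_rfl).symm.trans (congr_fun hz _)
  have off : ∀ {I J K}, I < J → I < K → entry J I (z K) + entry J K (z I) = 0 :=
    fun {I J K} hJ hK => by simpa [hK] using (Phi_apply z hJ hK.le).symm.trans (congr_fun hz _)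
  have h0 : ∀ a b, entry b a (z a) = 0 := by
    intro a b
    rcases lt_trichotomy a b with h | rfl | h
    · exact diag h
    · exact entry_self _ _
    · simpa [entry_swap a b] using off h h
  have swap : ∀ k j i, entry j i (z k) + entry j k (z i) = 0 := by
    intro k j i
    wlog hik : i < k generalizing k i
    · rcases (not_lt.1 hik).lt_or_eq with hki | rfl
      · simpa only [add_comm] using this i k hki
      · simp [h0]
    rcases lt_trichotomy i j with hij | rfl | hji
    · exact off hij hik
    · rw [entry_self, entry_swap k i, h0, neg_zero, add_zero]
    · linear_combination -off hji (hji.trans hik) - off (hji.trans hik) hji + entry_swap i j (z k)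
        + entry_swap k j (z i) + entry_swap k i (z j)
  linear_combination swap k j i - entry_swap k j (z i)

lemma Phi_eq_zero_of_entry_cyclic {z : Fin n → V F n}
    (h : ∀ k j i, entry j i (z k) = entry k j (z i)) : Phi F n z = 0 := by
  funext ⟨⟨J, I, K⟩, hJ, hK⟩
  simp only at hJ hK
  rw [Phi_apply z hJ hK, Pi.zero_apply]
  rcases hK.lt_or_eq with hK | rfl
  · simp [hK, h K J I, entry_swap K J]
  · simpa using (h J I I).symm

theorem Phi_eq_zero_iff {z : Fin n → V F n} :
    Phi F n z = 0 ↔ ∀ k j i, entry j i (z k) = entry k j (z i) :=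
  ⟨entry_cyclic_of_Phi_eq_zero, Phi_eq_zero_of_entry_cyclic⟩

lemma wedge_eq_zero_of_entry_eq_zero {α β : Fin n → F} {m : Fin n} (hm : α m ≠ 0)
    (h : ∀ j, entry j m (wedge α β) = 0) : wedge α β = 0 := by
  have hβ : ∀ j, β j = β m / α m * α j := fun j => by
    have := h j
    rw [entry_wedge] at this
    field_simp
    linear_combination -this
  refine ext_entry fun j i => ?_
  rw [entry_wedge, map_zero, hβ i, hβ j]
  ring

lemma eq_zero_of_mem_Psi {α : Fin n → F} {u : V F n} {m : Fin n} (hm : α m ≠ 0)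
    (hu : u ∈ Psi F n α) (h : ∀ j, entry j m u = 0) : u = 0 := by
  obtain ⟨β, rfl⟩ := mem_Psi_iff.1 hu
  exact wedge_eq_zero_of_entry_eq_zero hm h

theorem eq_zero_of_Phi_eq_zero_of_mem_Psi {α : Fin n → F} (hα : α ≠ 0) {z : Fin n → V F n}
    (hz : Phi F n z = 0) (hΨ : ∀ k, z k ∈ Psi F n α) : z = 0 := by
  obtain ⟨m, hm⟩ := Function.ne_iff.1 hα
  have cyc := entry_cyclic_of_Phi_eq_zero hz
  have hzm : z m = 0 := eq_zero_of_mem_Psi hm (hΨ m) fun j => by simpa using (cyc j m m).symm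
  funext k
  exact eq_zero_of_mem_Psi hm (hΨ k) fun j => by rw [cyc k j m, hzm, map_zero]

/-- The components of the alternating 3-form `α ∧ x`: `entry j i (tripleWedge α x k)` is its
`(k, j, i)` coefficient. -/
def tripleWedge (α : Fin n → F) (x : V F n) (k : Fin n) : V F n :=
  α k • x + wedge α fun i => entry i k x

lemma entry_tripleWedge (α : Fin n → F) (x : V F n) (k j i : Fin n) :
    entry j i (tripleWedge α x k) = α k * entry j i x + α j * entry i k x + α i * entry k j x := by
  rw [tripleWedge, map_add, map_smul, entry_wedge, smul_eq_mul, entry_swap k j]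
  ring

lemma Phi_tripleWedge (α : Fin n → F) (x : V F n) : Phi F n (tripleWedge α x) = 0 :=
  Phi_eq_zero_of_entry_cyclic fun k j i => by
    simp only [entry_tripleWedge]
    ring

lemma tripleWedge_mem (α : Fin n → F) (x : V F n) (k : Fin n) :
    tripleWedge α x k ∈ Psi F n α ⊔ span F {x} :=
  add_mem (mem_sup_right (smul_mem _ _ (mem_span_singleton_self x)))
    (mem_sup_left (wedge_mem_Psi _ _))

lemma tripleWedge_ne_zero {α : Fin n → F} (hα : α ≠ 0) {x : V F n} (hx : x ∉ Psi F n α) :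
    tripleWedge α x ≠ 0 := by
  obtain ⟨m, hm⟩ := Function.ne_iff.1 hα
  intro h
  have : α m • x = -wedge α fun i => entry i m x := eq_neg_of_add_eq_zero_left (congr_fun h m)
  rw [← smul_mem_iff _ hm, this] at hx
  exact hx (neg_mem (wedge_mem_Psi _ _))

theorem statement18_general (p : ℕ) [Fact p.Prime] (n : ℕ)
    (α : Fin n → ZMod p) (hα : α ≠ 0) (x : V (ZMod p) n) :
    (∃ z : Fin n → V (ZMod p) n, z ≠ 0 ∧ Phi (ZMod p) n z = 0 ∧
      ∀ i : Fin n, z i ∈ Psi (ZMod p) n α ⊔ Submodule.span (ZMod p) {x}) ↔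
    x ∉ Psi (ZMod p) n α := by
  constructor
  · rintro ⟨z, hz0, hz, hzX⟩ hx
    have hX : Psi (ZMod p) n α ⊔ span (ZMod p) {x} = Psi (ZMod p) n α :=
      sup_eq_left.2 ((span_singleton_le_iff_mem _ _).2 hx)
    exact hz0 (eq_zero_of_Phi_eq_zero_of_mem_Psi hα hz fun k => hX ▸ hzX k)
  · intro hx
    exact ⟨tripleWedge α x, tripleWedge_ne_zero hα hx, Phi_tripleWedge α x, tripleWedge_mem α x⟩

/-- Let `α ∈ Fⁿ` be nonzero, `x ∈ V(n)`, and `X = ⟨Ψ(α), x⟩`.  Then `Xⁿ ∩ ker(Φ_n)` is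
nontrivial if and only if `x ∉ Ψ(α)`. -/
theorem statement18 (p : ℕ) [Fact p.Prime] (hp2 : p ≠ 2) (n : ℕ) (hn : 1 < n)
    (α : Fin n → ZMod p) (hα : α ≠ 0) (x : V (ZMod p) n) :
    (∃ z : Fin n → V (ZMod p) n, z ≠ 0 ∧ Phi (ZMod p) n z = 0 ∧
      ∀ i : Fin n, z i ∈ Psi (ZMod p) n α ⊔ Submodule.span (ZMod p) {x}) ↔
    x ∉ Psi (ZMod p) n α :=
  statement18_general p n α hα x
end

section
/- Let n = 4, let β = (β₁₂₃, β₁₂₄, β₁₃₄, β₂₃₄) ∈ F⁴ be nonzero, let x ∈ V(4), and let X be the subspace of V(4) spanned by Υ(β) together with x. Then there exists a nonzero vector α ∈ F⁴ with Ψ(α) ⊆ X if and only if x ∉ Υ(β). -/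
open Submodule

variable (F : Type*) [Field F] (n : ℕ)

/-- For `β = (β₁₂₃, β₁₂₄, β₁₃₄, β₂₃₄) ∈ F⁴` (indexed here by `β 0, β 1, β 2, β 3`),
`Υ(β)` is the subspace of `V(4)` spanned by the four vectors
`x₁ = β₁₂₃·v[3,2] + β₁₂₄·v[4,2] + β₁₃₄·v[4,3]`,
`x₂ = −β₁₂₃·v[3,1] − β₁₂₄·v[4,1] + β₂₃₄·v[4,3]`,
`x₃ = β₁₂₃·v[2,1] − β₁₃₄·v[4,1] − β₂₃₄·v[4,2]`,
`x₄ = β₁₂₄·v[2,1] + β₁₃₄·v[3,1] + β₂₃₄·v[3,2]`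
(indices written 0-based below). -/
noncomputable def Upsilon (F : Type*) [Field F] (β : Fin 4 → F) : Submodule F (V F 4) :=
  Submodule.span F
    ({β 0 • v F 4 2 1 + β 1 • v F 4 3 1 + β 2 • v F 4 3 2,
      -(β 0 • v F 4 2 0) - β 1 • v F 4 3 0 + β 3 • v F 4 3 2,
      β 0 • v F 4 1 0 - β 2 • v F 4 3 0 - β 3 • v F 4 3 1,
      β 1 • v F 4 1 0 + β 2 • v F 4 2 0 + β 3 • v F 4 2 1} : Set (V F 4))

namespace S19

abbrev i10 : VIdx 4 := ⟨(1,0), by decide⟩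
abbrev i20 : VIdx 4 := ⟨(2,0), by decide⟩
abbrev i30 : VIdx 4 := ⟨(3,0), by decide⟩
abbrev i21 : VIdx 4 := ⟨(2,1), by decide⟩
abbrev i31 : VIdx 4 := ⟨(3,1), by decide⟩
abbrev i32 : VIdx 4 := ⟨(3,2), by decide⟩

variable {F : Type*} [Field F]

/-- Components of the contraction `α = ι_{β*} x`. -/
def A0 (β : Fin 4 → F) (x : V F 4) : F := β 1 * x i20 - β 2 * x i10 - β 0 * x i30
def A1 (β : Fin 4 → F) (x : V F 4) : F := β 1 * x i21 - β 3 * x i10 - β 0 * x i31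
def A2 (β : Fin 4 → F) (x : V F 4) : F := β 2 * x i21 - β 3 * x i20 - β 0 * x i32
def A3 (β : Fin 4 → F) (x : V F 4) : F := β 2 * x i31 - β 3 * x i30 - β 1 * x i32

/-- The four generators of `Upsilon`. -/
noncomputable def g0 (β : Fin 4 → F) : V F 4 := β 0 • v F 4 2 1 + β 1 • v F 4 3 1 + β 2 • v F 4 3 2
noncomputable def g1 (β : Fin 4 → F) : V F 4 := -(β 0 • v F 4 2 0) - β 1 • v F 4 3 0 + β 3 • v F 4 3 2
noncomputable def g2 (β : Fin 4 → F) : V F 4 := β 0 • v F 4 1 0 - β 2 • v F 4 3 0 - β 3 • v F 4 3 1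
noncomputable def g3 (β : Fin 4 → F) : V F 4 := β 1 • v F 4 1 0 + β 2 • v F 4 2 0 + β 3 • v F 4 2 1

lemma ups_eq (β : Fin 4 → F) :
    Upsilon F β = Submodule.span F ({g0 β, g1 β, g2 β, g3 β} : Set (V F 4)) := rfl

lemma g0_mem (β : Fin 4 → F) : g0 β ∈ Upsilon F β := by
  rw [ups_eq]; exact Submodule.subset_span (Or.inl rfl)
lemma g1_mem (β : Fin 4 → F) : g1 β ∈ Upsilon F β := by
  rw [ups_eq]; exact Submodule.subset_span (Or.inr (Or.inl rfl))
lemma g2_mem (β : Fin 4 → F) : g2 β ∈ Upsilon F β := by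
  rw [ups_eq]; exact Submodule.subset_span (Or.inr (Or.inr (Or.inl rfl)))
lemma g3_mem (β : Fin 4 → F) : g3 β ∈ Upsilon F β := by
  rw [ups_eq]; exact Submodule.subset_span (Or.inr (Or.inr (Or.inr rfl)))

/-- Master identities: `y_i(α) = ι_{β*}(x ∧ e_i) - β̂_i • x`. -/
lemma master0 (β : Fin 4 → F) (x : V F 4) :
    (∑ j : Fin 4, ![A0 β x, A1 β x, A2 β x, A3 β x] j • v F 4 j 0) =
      x i32 • g1 β - x i31 • g2 β + x i21 • g3 β - β 3 • x := by
  funext q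
  rw [Fin.sum_univ_four]
  fin_cases q <;>
    simp (config := { decide := true })
      [g1, g2, g3, v, A0, A1, A2, A3, Pi.single_apply] <;> ring

lemma master1 (β : Fin 4 → F) (x : V F 4) :
    (∑ j : Fin 4, ![A0 β x, A1 β x, A2 β x, A3 β x] j • v F 4 j 1) =
      -(x i32 • g0 β) + x i30 • g2 β - x i20 • g3 β + β 2 • x := by
  funext q
  rw [Fin.sum_univ_four]
  fin_cases q <;>
    simp (config := { decide := true })
      [g0, g2, g3, v, A0, A1, A2, A3, Pi.single_apply] <;> ring

lemma master2 (β : Fin 4 → F) (x : V F 4) :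
    (∑ j : Fin 4, ![A0 β x, A1 β x, A2 β x, A3 β x] j • v F 4 j 2) =
      x i31 • g0 β - x i30 • g1 β + x i10 • g3 β - β 1 • x := by
  funext q
  rw [Fin.sum_univ_four]
  fin_cases q <;>
    simp (config := { decide := true })
      [g0, g1, g3, v, A0, A1, A2, A3, Pi.single_apply] <;> ring

lemma master3 (β : Fin 4 → F) (x : V F 4) :
    (∑ j : Fin 4, ![A0 β x, A1 β x, A2 β x, A3 β x] j • v F 4 j 3) =
      -(x i21 • g0 β) + x i20 • g1 β - x i10 • g2 β + β 0 • x := by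
  funext q
  rw [Fin.sum_univ_four]
  fin_cases q <;>
    simp (config := { decide := true })
      [g0, g1, g2, v, A0, A1, A2, A3, Pi.single_apply] <;> ring

/-- The linear functionals cutting out `Upsilon` (the wedge pairing with its generators). -/
lemma L0mem {β : Fin 4 → F} {w : V F 4} (hw : w ∈ Upsilon F β) :
    β 2 * w i10 - β 1 * w i20 + β 0 * w i30 = 0 := by
  have hle : Upsilon F β ≤ LinearMap.ker
      ((β 2 • LinearMap.proj i10 - β 1 • LinearMap.proj i20 + β 0 • LinearMap.proj i30 :
        V F 4 →ₗ[F] F)) := by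
    rw [ups_eq, Submodule.span_le]
    rintro w' (rfl | rfl | rfl | rfl) <;>
      simp (config := { decide := true })
        [g0, g1, g2, g3, v, Pi.single_apply, LinearMap.mem_ker] <;> ring
  simpa using hle hw

lemma L1mem {β : Fin 4 → F} {w : V F 4} (hw : w ∈ Upsilon F β) :
    β 3 * w i10 + β 0 * w i31 - β 1 * w i21 = 0 := by
  have hle : Upsilon F β ≤ LinearMap.ker
      ((β 3 • LinearMap.proj i10 + β 0 • LinearMap.proj i31 - β 1 • LinearMap.proj i21 :
        V F 4 →ₗ[F] F)) := by
    rw [ups_eq, Submodule.span_le]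
    rintro w' (rfl | rfl | rfl | rfl) <;>
      simp (config := { decide := true })
        [g0, g1, g2, g3, v, Pi.single_apply, LinearMap.mem_ker] <;> ring
  simpa using hle hw

lemma L2mem {β : Fin 4 → F} {w : V F 4} (hw : w ∈ Upsilon F β) :
    β 0 * w i32 + β 3 * w i20 - β 2 * w i21 = 0 := by
  have hle : Upsilon F β ≤ LinearMap.ker
      ((β 0 • LinearMap.proj i32 + β 3 • LinearMap.proj i20 - β 2 • LinearMap.proj i21 :
        V F 4 →ₗ[F] F)) := by
    rw [ups_eq, Submodule.span_le]
    rintro w' (rfl | rfl | rfl | rfl) <;>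
      simp (config := { decide := true })
        [g0, g1, g2, g3, v, Pi.single_apply, LinearMap.mem_ker] <;> ring
  simpa using hle hw

lemma L3mem {β : Fin 4 → F} {w : V F 4} (hw : w ∈ Upsilon F β) :
    β 1 * w i32 - β 2 * w i31 + β 3 * w i30 = 0 := by
  have hle : Upsilon F β ≤ LinearMap.ker
      ((β 1 • LinearMap.proj i32 - β 2 • LinearMap.proj i31 + β 3 • LinearMap.proj i30 :
        V F 4 →ₗ[F] F)) := by
    rw [ups_eq, Submodule.span_le]
    rintro w' (rfl | rfl | rfl | rfl) <;>
      simp (config := { decide := true })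
        [g0, g1, g2, g3, v, Pi.single_apply, LinearMap.mem_ker] <;> ring
  simpa using hle hw



lemma a_eq_zero {β a : Fin 4 → F} (hβ : β ≠ 0)
    (h : ∀ i : Fin 4, (∑ j : Fin 4, a j • v F 4 j i) ∈ Upsilon F β) : a = 0 := by
  have e00 := L0mem (h 0); have e01 := L1mem (h 0)
  have e02 := L2mem (h 0); have e03 := L3mem (h 0)
  have e10 := L0mem (h 1); have e11 := L1mem (h 1); have e12 := L2mem (h 1); have e13 := L3mem (h 1)
  have e20 := L0mem (h 2); have e21 := L1mem (h 2); have e23 := L3mem (h 2)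
  have e30 := L0mem (h 3); have e31 := L1mem (h 3); have e32 := L2mem (h 3)
  simp (config := { decide := true }) [Fin.sum_univ_four, v, Pi.single_apply]
    at e00 e01 e11 e02 e03 e10 e12 e13 e20 e21 e23 e30 e31 e32
  have ha : a 0 = 0 ∧ a 1 = 0 ∧ a 2 = 0 ∧ a 3 = 0 := by
    rcases Function.ne_iff.mp hβ with ⟨k, hk⟩
    fin_cases k
    · have h0 := e30.resolve_left hk
      have h1 := e31.resolve_left hk
      have h2 := e32.resolve_left hk
      have h3 : a 3 = 0 := by
        have hm : β 0 * a 3 = 0 := by linear_combination e00 - β 2 * h1 + β 1 * h2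
        exact (mul_eq_zero.mp hm).resolve_left hk
      exact ⟨h0, h1, h2, h3⟩
    · have h0 := e20.resolve_left hk
      have h1 := e21.resolve_left hk
      have h3 := e23.resolve_left hk
      have h2 : a 2 = 0 := by
        have hm : β 1 * a 2 = 0 := by linear_combination -e00 + β 2 * h1 + β 0 * h3
        exact (mul_eq_zero.mp hm).resolve_left hk
      exact ⟨h0, h1, h2, h3⟩
    · have h0 := e10.resolve_left hk
      have h2 := e12.resolve_left hk
      have h3 := e13.resolve_left hk
      have h1 : a 1 = 0 := by
        have hm : β 2 * a 1 = 0 := by linear_combination e00 + β 1 * h2 - β 0 * h3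
        exact (mul_eq_zero.mp hm).resolve_left hk
      exact ⟨h0, h1, h2, h3⟩
    · have h1 := e01.resolve_left hk
      have h2 := e02.resolve_left hk
      have h3 := e03.resolve_left hk
      have h0 : a 0 = 0 := by
        have hm : β 3 * a 0 = 0 := by linear_combination -e11 + β 0 * h3 - β 1 * h2
        exact (mul_eq_zero.mp hm).resolve_left hk
      exact ⟨h0, h1, h2, h3⟩
  funext j
  fin_cases j
  · exact ha.1
  · exact ha.2.1
  · exact ha.2.2.1
  · exact ha.2.2.2

end S19


open S19 in
/-- Let `β ∈ F⁴` be nonzero, `x ∈ V(4)`, and `X = ⟨Υ(β), x⟩`.  Then there is a nonzero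
`α ∈ F⁴` with `Ψ(α) ⊆ X` if and only if `x ∉ Υ(β)`. -/
theorem statement19 (p : ℕ) [Fact p.Prime] (hp2 : p ≠ 2)
    (β : Fin 4 → ZMod p) (hβ : β ≠ 0) (x : V (ZMod p) 4) :
    (∃ α : Fin 4 → ZMod p, α ≠ 0 ∧
      Psi (ZMod p) 4 α ≤ Upsilon (ZMod p) β ⊔ Submodule.span (ZMod p) {x}) ↔
    x ∉ Upsilon (ZMod p) β := by
  constructor
  · rintro ⟨a, ha, hle⟩ hx
    have hsub : Submodule.span (ZMod p) {x} ≤ Upsilon (ZMod p) β :=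
      Submodule.span_le.mpr (Set.singleton_subset_iff.mpr hx)
    rw [sup_eq_left.mpr hsub] at hle
    have h : ∀ i : Fin 4, (∑ j : Fin 4, a j • v (ZMod p) 4 j i) ∈ Upsilon (ZMod p) β :=
      fun i => hle (Submodule.subset_span ⟨i, rfl⟩)
    exact ha (a_eq_zero hβ h)
  · intro hx
    refine ⟨![A0 β x, A1 β x, A2 β x, A3 β x], ?_, ?_⟩
    · intro h0
      have hA0 : A0 β x = 0 := by simpa using congrFun h0 0
      have hA1 : A1 β x = 0 := by simpa using congrFun h0 1
      have hA2 : A2 β x = 0 := by simpa using congrFun h0 2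
      have hA3 : A3 β x = 0 := by simpa using congrFun h0 3
      rcases Function.ne_iff.mp hβ with ⟨k, hk⟩
      apply hx
      fin_cases k
      · have m := master3 β x
        rw [hA0, hA1, hA2, hA3] at m
        simp only [Fin.sum_univ_four, Matrix.cons_val_zero, Matrix.cons_val_one,
          Matrix.head_cons, Matrix.cons_val_two, Matrix.tail_cons, Matrix.cons_val_three,
          zero_smul, add_zero] at m
        have h2 : β 0 • x = x i21 • g0 β - x i20 • g1 β + x i10 • g2 β := by
          linear_combination (norm := module) -m
        have hmem : β 0 • x ∈ Upsilon (ZMod p) β := by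
          rw [h2]
          exact add_mem (sub_mem (Submodule.smul_mem _ _ (g0_mem β))
            (Submodule.smul_mem _ _ (g1_mem β))) (Submodule.smul_mem _ _ (g2_mem β))
        rw [← inv_smul_smul₀ hk x]
        exact Submodule.smul_mem _ _ hmem
      · have m := master2 β x
        rw [hA0, hA1, hA2, hA3] at m
        simp only [Fin.sum_univ_four, Matrix.cons_val_zero, Matrix.cons_val_one,
          Matrix.head_cons, Matrix.cons_val_two, Matrix.tail_cons, Matrix.cons_val_three,
          zero_smul, add_zero] at m
        have h2 : β 1 • x = x i31 • g0 β - x i30 • g1 β + x i10 • g3 β := by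
          linear_combination (norm := module) m
        have hmem : β 1 • x ∈ Upsilon (ZMod p) β := by
          rw [h2]
          exact add_mem (sub_mem (Submodule.smul_mem _ _ (g0_mem β))
            (Submodule.smul_mem _ _ (g1_mem β))) (Submodule.smul_mem _ _ (g3_mem β))
        rw [← inv_smul_smul₀ hk x]
        exact Submodule.smul_mem _ _ hmem
      · have m := master1 β x
        rw [hA0, hA1, hA2, hA3] at m
        simp only [Fin.sum_univ_four, Matrix.cons_val_zero, Matrix.cons_val_one,
          Matrix.head_cons, Matrix.cons_val_two, Matrix.tail_cons, Matrix.cons_val_three,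
          zero_smul, add_zero] at m
        have h2 : β 2 • x = x i32 • g0 β - x i30 • g2 β + x i20 • g3 β := by
          linear_combination (norm := module) -m
        have hmem : β 2 • x ∈ Upsilon (ZMod p) β := by
          rw [h2]
          exact add_mem (sub_mem (Submodule.smul_mem _ _ (g0_mem β))
            (Submodule.smul_mem _ _ (g2_mem β))) (Submodule.smul_mem _ _ (g3_mem β))
        rw [← inv_smul_smul₀ hk x]
        exact Submodule.smul_mem _ _ hmem
      · have m := master0 β x
        rw [hA0, hA1, hA2, hA3] at m
        simp only [Fin.sum_univ_four, Matrix.cons_val_zero, Matrix.cons_val_one,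
          Matrix.head_cons, Matrix.cons_val_two, Matrix.tail_cons, Matrix.cons_val_three,
          zero_smul, add_zero] at m
        have h2 : β 3 • x = x i32 • g1 β - x i31 • g2 β + x i21 • g3 β := by
          linear_combination (norm := module) m
        have hmem : β 3 • x ∈ Upsilon (ZMod p) β := by
          rw [h2]
          exact add_mem (sub_mem (Submodule.smul_mem _ _ (g1_mem β))
            (Submodule.smul_mem _ _ (g2_mem β))) (Submodule.smul_mem _ _ (g3_mem β))
        rw [← inv_smul_smul₀ hk x]
        exact Submodule.smul_mem _ _ hmem
    · apply Submodule.span_le.mpr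
      rintro _ ⟨i, rfl⟩
      fin_cases i
      · show (∑ j : Fin 4, ![A0 β x, A1 β x, A2 β x, A3 β x] j • v (ZMod p) 4 j 0) ∈ _
        rw [master0 β x]
        refine sub_mem (Submodule.mem_sup_left (add_mem (sub_mem
          (Submodule.smul_mem _ _ (g1_mem β)) (Submodule.smul_mem _ _ (g2_mem β)))
          (Submodule.smul_mem _ _ (g3_mem β)))) (Submodule.mem_sup_right
          (Submodule.smul_mem _ _ (Submodule.mem_span_singleton_self x)))
      · show (∑ j : Fin 4, ![A0 β x, A1 β x, A2 β x, A3 β x] j • v (ZMod p) 4 j 1) ∈ _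
        rw [master1 β x]
        refine add_mem (Submodule.mem_sup_left (sub_mem (add_mem
          (neg_mem (Submodule.smul_mem _ _ (g0_mem β)))
          (Submodule.smul_mem _ _ (g2_mem β)))
          (Submodule.smul_mem _ _ (g3_mem β)))) (Submodule.mem_sup_right
          (Submodule.smul_mem _ _ (Submodule.mem_span_singleton_self x)))
      · show (∑ j : Fin 4, ![A0 β x, A1 β x, A2 β x, A3 β x] j • v (ZMod p) 4 j 2) ∈ _
        rw [master2 β x]
        refine sub_mem (Submodule.mem_sup_left (add_mem (sub_mem
          (Submodule.smul_mem _ _ (g0_mem β)) (Submodule.smul_mem _ _ (g1_mem β)))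
          (Submodule.smul_mem _ _ (g3_mem β)))) (Submodule.mem_sup_right
          (Submodule.smul_mem _ _ (Submodule.mem_span_singleton_self x)))
      · show (∑ j : Fin 4, ![A0 β x, A1 β x, A2 β x, A3 β x] j • v (ZMod p) 4 j 3) ∈ _
        rw [master3 β x]
        refine add_mem (Submodule.mem_sup_left (sub_mem (add_mem
          (neg_mem (Submodule.smul_mem _ _ (g0_mem β)))
          (Submodule.smul_mem _ _ (g1_mem β)))
          (Submodule.smul_mem _ _ (g2_mem β)))) (Submodule.mem_sup_right
          (Submodule.smul_mem _ _ (Submodule.mem_span_singleton_self x)))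
end
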